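/- arXiv:1407.5161 — 2 statements merged into one kernel-verified Lean document; each statement's English description precedes it below -/
import Mathlib

section
/- For Hermitian positive semidefinite N×N matrices A and B, Tr(AB) ≥ Σ_{i=1}^N σ_{A,i}^↓ σ_{B,i}^↑, where σ_{A,i}^↓ are the eigenvalues of A in decreasing order and σ_{B,i}^↑ the eigenvalues of B in increasing order. -/
/-!
Diagonalize `A = U diag(α) U*` and `B = V diag(β) V*`. With `W = U* V` one gets
`Re Tr(AB) = ∑ i j, α i β j |W i j|²`, and since `W` is unitary the matrix `S = (|W i j|²)` is
doubly stochastic. By Birkhoff's theorem `S` lies in the convex hull of the permutation matrices,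
so the linear functional `S ↦ α ⬝ᵥ S β` is bounded below by its values `∑ i, α i β (σ i)` at
permutations, and the rearrangement inequality bounds each of those by the oppositely ordered sum.
-/

namespace Matrix

variable {m n 𝕜 : Type*} [RCLike 𝕜]

def normSqEntries (W : Matrix m n 𝕜) : Matrix m n ℝ :=
  of fun i j => ‖W i j‖ ^ 2

variable [Fintype n]

theorem mul_conjTranspose_apply_self (W : Matrix m n 𝕜) (i : m) :
    (W * Wᴴ) i i = ((∑ j, normSqEntries W i j : ℝ) : 𝕜) := by
  simp [normSqEntries, mul_apply, ← starRingEnd_apply, RCLike.mul_conj]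

variable [DecidableEq n]

section DoublyStochastic

variable {R : Type*}

theorem submatrix_mem_doublyStochastic [Semiring R] [PartialOrder R] [IsOrderedRing R]
    [Fintype m] [DecidableEq m] {M : Matrix n n R} (hM : M ∈ doublyStochastic R n)
    (e f : m ≃ n) : M.submatrix e f ∈ doublyStochastic R m := by
  obtain ⟨hnonneg, hrow, hcol⟩ := mem_doublyStochastic_iff_sum.1 hM
  exact mem_doublyStochastic_iff_sum.2 ⟨fun i j => hnonneg _ _,
    fun i => (f.sum_comp (M (e i))).trans (hrow _), fun j => (e.sum_comp (M · (f j))).trans (hcol _)⟩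

theorem _root_.Antivary.dotProduct_le_dotProduct_mulVec_of_mem_doublyStochastic [Field R]
    [LinearOrder R] [IsStrictOrderedRing R] {M : Matrix n n R} {a b : n → R}
    (hab : Antivary a b) (hM : M ∈ doublyStochastic R n) :
    a ⬝ᵥ b ≤ a ⬝ᵥ (M *ᵥ b) := by
  have hlin : IsLinearMap R fun M : Matrix n n R => a ⬝ᵥ (M *ᵥ b) :=
    ⟨fun M N => by simp only [add_mulVec, dotProduct_add],
     fun c M => by simp only [smul_mulVec, dotProduct_smul]⟩
  rw [← SetLike.mem_coe, doublyStochastic_eq_convexHull_permMatrix] at hM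
  refine convexHull_min ?_ (convex_halfSpace_ge hlin _) hM
  rintro _ ⟨σ, rfl⟩
  simpa [permMatrix_mulVec, dotProduct] using hab.sum_mul_le_sum_mul_comp_perm (σ := σ)

end DoublyStochastic

theorem sum_normSqEntries_of_mem_unitaryGroup {W : Matrix n n 𝕜} (hW : W ∈ unitaryGroup n 𝕜)
    (i : n) : ∑ j, normSqEntries W i j = 1 := by
  have h := mul_conjTranspose_apply_self W i
  rw [← star_eq_conjTranspose, Unitary.mul_star_self_of_mem hW, one_apply_eq] at h
  exact_mod_cast h.symm

theorem normSqEntries_mem_doublyStochastic {W : Matrix n n 𝕜} (hW : W ∈ unitaryGroup n 𝕜) :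
    normSqEntries W ∈ doublyStochastic ℝ n := by
  refine mem_doublyStochastic_iff_sum.2 ⟨fun i j => sq_nonneg _,
    sum_normSqEntries_of_mem_unitaryGroup hW, fun j => ?_⟩
  simpa [normSqEntries] using sum_normSqEntries_of_mem_unitaryGroup (Unitary.star_mem hW) j

theorem re_trace_diagonal_mul_diagonal_mul_conjTranspose (x y : n → ℝ) (W : Matrix n n 𝕜) :
    RCLike.re (diagonal (RCLike.ofReal ∘ x) * W * diagonal (RCLike.ofReal ∘ y) * Wᴴ).trace =
      x ⬝ᵥ (normSqEntries W *ᵥ y) := by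
  simp only [trace, diag, mul_apply, diagonal_apply, conjTranspose_apply, Function.comp_apply,
    ite_mul, zero_mul, mul_ite, mul_zero, Finset.sum_ite_eq, Finset.sum_ite_eq', Finset.mem_univ,
    if_true, map_sum]
  refine Finset.sum_congr rfl fun i _ => ?_
  simp only [mulVec, dotProduct, normSqEntries, of_apply, Finset.mul_sum]
  refine Finset.sum_congr rfl fun j _ => ?_
  rw [mul_right_comm _ (W i j), mul_assoc _ (W i j), ← starRingEnd_apply, RCLike.mul_conj]
  norm_cast
  ring

theorem IsHermitian.re_trace_mul_eq_eigenvalues_dotProduct {A B : Matrix n n 𝕜}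
    (hA : A.IsHermitian) (hB : B.IsHermitian) :
    RCLike.re (A * B).trace = hA.eigenvalues ⬝ᵥ (normSqEntries
      ((star hA.eigenvectorUnitary * hB.eigenvectorUnitary : unitaryGroup n 𝕜) : Matrix n n 𝕜) *ᵥ
        hB.eigenvalues) := by
  set U : Matrix n n 𝕜 := (hA.eigenvectorUnitary : Matrix n n 𝕜)
  set V : Matrix n n 𝕜 := (hB.eigenvectorUnitary : Matrix n n 𝕜)
  rw [← re_trace_diagonal_mul_diagonal_mul_conjTranspose]
  conv_lhs => rw [hA.spectral_theorem, hB.spectral_theorem]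
  simp only [Unitary.conjStarAlgAut_apply]
  rw [show U * diagonal (RCLike.ofReal ∘ hA.eigenvalues) * star U *
      (V * diagonal (RCLike.ofReal ∘ hB.eigenvalues) * star V) =
      U * (diagonal (RCLike.ofReal ∘ hA.eigenvalues) * (star U * V) *
        diagonal (RCLike.ofReal ∘ hB.eigenvalues) * star V) by simp only [mul_assoc],
    trace_mul_comm]
  simp only [Submonoid.coe_mul, Unitary.coe_star, conjTranspose_mul, conjTranspose_conjTranspose,
    star_eq_conjTranspose, mul_assoc, U, V]

end Matrix

open Matrix ComplexOrder

/-- Lower trace inequality: for PSD A, B,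
    Tr(AB) ≥ Σ_i σ_{A,i}^↓ σ_{B,i}^↑ (A decreasing, B increasing order). -/
theorem trace_mul_ge_sum_opposed_eigenvalues {N : ℕ}
    (A B : Matrix (Fin N) (Fin N) ℂ) (hA : A.PosSemidef) (hB : B.PosSemidef)
    (a b : Fin N → ℝ) (ha : Antitone a) (hb : Monotone b)
    (hea : ∃ e : Equiv.Perm (Fin N), a = hA.1.eigenvalues ∘ e)
    (heb : ∃ e : Equiv.Perm (Fin N), b = hB.1.eigenvalues ∘ e) :
    (∑ i, a i * b i) ≤ (A * B).trace.re := by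
  obtain ⟨e, hae⟩ := hea
  obtain ⟨f, hbf⟩ := heb
  set W := star hA.1.eigenvectorUnitary * hB.1.eigenvectorUnitary
  set S := normSqEntries (W : Matrix (Fin N) (Fin N) ℂ)
  have hS : S ∈ doublyStochastic ℝ (Fin N) := normSqEntries_mem_doublyStochastic W.2
  calc ∑ i, a i * b i = a ⬝ᵥ b := rfl
    _ ≤ a ⬝ᵥ (S.submatrix e f *ᵥ b) :=
      (ha.antivary hb).dotProduct_le_dotProduct_mulVec_of_mem_doublyStochastic
        (submatrix_mem_doublyStochastic hS e f)
    _ = hA.1.eigenvalues ⬝ᵥ (S *ᵥ hB.1.eigenvalues) := by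
      rw [hae, hbf, submatrix_mulVec_equiv, Function.comp_assoc, Equiv.self_comp_symm,
        Function.comp_id, comp_equiv_dotProduct_comp_equiv]
    _ = (A * B).trace.re := (hA.1.re_trace_mul_eq_eigenvalues_dotProduct hB.1).symm
end

section
/- Let Z be Hermitian positive definite with Z = U Diag(σ_m) Uᴴ, σ_m > 0 in decreasing order, and constants α_n > 0, weights w_n > 0 (n = 1,…,M), power budget τ > 0. Among Hermitian PSD matrices Q with Tr(Q) ≤ τ that commute with Z, the minimizer of Σ_n w_n Tr[(Z^{-1} + α_n Q)^{-1}] is Q = U Diag(p_m) Uᴴ where the powers p_m ≥ 0 satisfy the water-filling condition: Σ_n w_n α_n σ_m² / (1 + α_n σ_m p_m)² = λ for all m with p_m > 0, and Σ_n w_n α_n σ_m² ≤ λ for m with p_m = 0, with λ chosen so that Σ_m p_m = τ. -/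
open Matrix ComplexOrder

/-!
Conjugating by `U` turns `Z⁻¹ + αₙ Q` into `diag(σ)⁻¹ + αₙ B` with `B = Uᴴ Q U` positive
semidefinite and `Tr B = Tr Q`. For a positive definite matrix `A` one has `(A⁻¹)ᵢᵢ ≥ 1 / Aᵢᵢ`,
with equality for diagonal `A`, so the objective at `Q` is at least the separable objective
`∑ₙ wₙ ∑ₘ (σₘ⁻¹ + αₙ bₘ)⁻¹` at the diagonal `b` of `B`, and equals it at `Q = U diag(p) Uᴴ`.
That separable objective is convex in each `bₘ`, the water-filling conditions are its KKT
conditions, and the supporting lines at `p` together with the budget show that `p` minimizes it.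
-/

namespace Matrix

section Unitary

variable {ι α : Type*} [Fintype ι] [DecidableEq ι] [CommRing α] [StarRing α]
  {U : Matrix ι ι α}

theorem inv_conj_of_mem_unitaryGroup (hU : U ∈ unitaryGroup ι α) (X : Matrix ι ι α) :
    (U * X * Uᴴ)⁻¹ = U * X⁻¹ * Uᴴ := by
  have hUU : U * Uᴴ = 1 := mem_unitaryGroup_iff.mp hU
  have hUU' : Uᴴ * U = 1 := mem_unitaryGroup_iff'.mp hU
  rw [mul_inv_rev, mul_inv_rev, inv_eq_left_inv hUU, inv_eq_left_inv hUU', mul_assoc]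

theorem trace_conj_of_mem_unitaryGroup (hU : U ∈ unitaryGroup ι α) (X : Matrix ι ι α) :
    (U * X * Uᴴ).trace = X.trace := by
  rw [trace_mul_cycle, ← star_eq_conjTranspose, mem_unitaryGroup_iff'.mp hU, one_mul]

theorem conj_conjTranspose_mul_mul_of_mem_unitaryGroup (hU : U ∈ unitaryGroup ι α)
    (X : Matrix ι ι α) : U * (Uᴴ * X * U) * Uᴴ = X := by
  have hUU : U * Uᴴ = 1 := mem_unitaryGroup_iff.mp hU
  simp only [← mul_assoc, hUU, one_mul]
  rw [mul_assoc, hUU, mul_one]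

theorem trace_inv_conj_add_smul_conj_of_mem_unitaryGroup (hU : U ∈ unitaryGroup ι α)
    (D X : Matrix ι ι α) (c : α) :
    ((U * D * Uᴴ + c • (U * X * Uᴴ))⁻¹).trace = ((D + c • X)⁻¹).trace := by
  rw [← Matrix.smul_mul, ← Matrix.mul_smul, ← add_mul, ← mul_add,
    inv_conj_of_mem_unitaryGroup hU, trace_conj_of_mem_unitaryGroup hU]

end Unitary

theorem inv_diagonal_of_ne_zero {ι K : Type*} [Fintype ι] [DecidableEq ι] [Field K] {d : ι → K}
    (hd : ∀ i, d i ≠ 0) : (diagonal d)⁻¹ = diagonal fun i => (d i)⁻¹ :=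
  inv_eq_right_inv (by simp [diagonal_mul_diagonal, hd])

namespace PosDef

variable {n 𝕜 : Type*} [Fintype n] [DecidableEq n] [RCLike 𝕜] {A : Matrix n n 𝕜}

theorem inv_re_diag_le_re_inv_diag (hA : A.PosDef) (i : n) :
    (RCLike.re (A i i))⁻¹ ≤ RCLike.re (A⁻¹ i i) := by
  have := hA.isUnit.invertible
  set a := RCLike.re (A i i)
  have ha : (a : 𝕜) ≠ 0 := RCLike.ofReal_ne_zero.mpr (RCLike.pos_iff.mp hA.diag_pos).1.ne'
  set e : n → 𝕜 := Pi.single i 1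
  obtain ⟨v, hv⟩ : ∃ v, A⁻¹ *ᵥ e = v := ⟨_, rfl⟩
  have hAv : A *ᵥ v = e := by simp [← hv, mulVec_mulVec]
  have hee : star e ⬝ᵥ e = 1 := by simp [e]
  have hvAe : star v ⬝ᵥ (A *ᵥ e) = 1 := by
    rw [dotProduct_mulVec, ← hA.isHermitian.eq, ← star_mulVec, hAv, hee]
  have hve : star v ⬝ᵥ e = A⁻¹ i i := by simp [e, ← hv, hA.inv.isHermitian.apply i i]
  have heAe : star e ⬝ᵥ (A *ᵥ e) = a := by simp [e, a, hA.isHermitian.coe_re_apply_self]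
  -- `A⁻¹ e - a⁻¹ e` is the `A`-orthogonal component of `A⁻¹ e` against `e`
  have hquad : star (v - a⁻¹ • e) ⬝ᵥ (A *ᵥ (v - a⁻¹ • e)) = A⁻¹ i i - (a⁻¹ : ℝ) := by
    simp only [star_sub, star_smul, mulVec_sub, mulVec_smul, sub_dotProduct, dotProduct_sub,
      smul_dotProduct, dotProduct_smul, hAv, hve, hee, hvAe, heAe, star_trivial,
      RCLike.real_smul_eq_coe_mul, RCLike.ofReal_inv]
    field_simp
    ring
  have := hA.posSemidef.re_dotProduct_nonneg (v - a⁻¹ • e)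
  rw [hquad, map_sub, RCLike.ofReal_re] at this
  linarith

theorem sum_inv_re_diag_le_re_trace_inv (hA : A.PosDef) :
    ∑ i, (RCLike.re (A i i))⁻¹ ≤ RCLike.re A⁻¹.trace := by
  rw [trace, map_sum]
  exact Finset.sum_le_sum fun i _ => hA.inv_re_diag_le_re_inv_diag i

end PosDef

section DiagonalAddSmul

variable {ι : Type*} [Fintype ι] [DecidableEq ι] {d : ι → ℝ} {c : ℝ}

theorem re_trace_inv_diagonal_add_smul_diagonal (hd : ∀ i, 0 < d i) (hc : 0 ≤ c) {x : ι → ℝ}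
    (hx : ∀ i, 0 ≤ x i) :
    ((diagonal (fun i => (d i : ℂ)) + (c : ℂ) • diagonal (fun i => (x i : ℂ)))⁻¹).trace.re =
      ∑ i, (d i + c * x i)⁻¹ := by
  have hpos : ∀ i, 0 < d i + c * x i := fun i =>
    add_pos_of_pos_of_nonneg (hd i) (mul_nonneg hc (hx i))
  have hdiag : diagonal (fun i => (d i : ℂ)) + (c : ℂ) • diagonal (fun i => (x i : ℂ)) =
      diagonal fun i => ((d i + c * x i : ℝ) : ℂ) := by
    rw [← diagonal_smul, diagonal_add]
    congr 1
    ext i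
    simp
  rw [hdiag, inv_diagonal_of_ne_zero fun i => Complex.ofReal_ne_zero.mpr (hpos i).ne',
    trace_diagonal, Complex.re_sum]
  simp only [← Complex.ofReal_inv, Complex.ofReal_re]

theorem sum_inv_add_re_diag_le_re_trace_inv (hd : ∀ i, 0 < d i) (hc : 0 ≤ c)
    {B : Matrix ι ι ℂ} (hB : B.PosSemidef) :
    ∑ i, (d i + c * (B i i).re)⁻¹ ≤
      ((diagonal (fun i => (d i : ℂ)) + (c : ℂ) • B)⁻¹).trace.re := by
  have hA : (diagonal (fun i => (d i : ℂ)) + (c : ℂ) • B).PosDef :=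
    (PosDef.diagonal fun i => by simpa using hd i).add_posSemidef
      (hB.smul (Complex.zero_le_real.mpr hc))
  refine le_of_eq_of_le (Finset.sum_congr rfl fun i _ => ?_) hA.sum_inv_re_diag_le_re_trace_inv
  simp

end DiagonalAddSmul

end Matrix

theorem inv_sub_div_sq_le_inv {u v : ℝ} (hu : 0 < u) (hv : 0 < v) :
    u⁻¹ - (v - u) / u ^ 2 ≤ v⁻¹ := by
  have : v⁻¹ - (u⁻¹ - (v - u) / u ^ 2) = (v - u) ^ 2 / (u ^ 2 * v) := by
    field_simp
    ring
  nlinarith [show 0 ≤ (v - u) ^ 2 / (u ^ 2 * v) by positivity]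

/-- KKT sufficiency for a separable allocation problem: `g i` is the marginal decrease of `F i`
at `p i`, and `lam` the multiplier of the budget constraint. -/
theorem sum_le_sum_of_kkt {ι : Type*} [Fintype ι] (F : ι → ℝ → ℝ) (g p q : ι → ℝ) (lam : ℝ)
    (hF : ∀ i y, 0 ≤ y → F i (p i) - g i * (y - p i) ≤ F i y) (hg : ∀ i, 0 ≤ g i)
    (hpos : ∀ i, 0 < p i → g i = lam) (hzero : ∀ i, p i = 0 → g i ≤ lam)
    (hp : ∀ i, 0 ≤ p i) (hq : ∀ i, 0 ≤ q i) (hbudget : ∑ i, q i ≤ ∑ i, p i) :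
    ∑ i, F i (p i) ≤ ∑ i, F i (q i) := by
  have hslope : ∀ i, g i * (q i - p i) ≤ lam * (q i - p i) := fun i => by
    rcases (hp i).eq_or_lt with h | h
    · exact mul_le_mul_of_nonneg_right (hzero i h.symm) (by linarith [hq i])
    · rw [hpos i h]
  have hlam : lam * ∑ i, (q i - p i) ≤ 0 := by
    rcases isEmpty_or_nonempty ι with _ | ⟨⟨i⟩⟩
    · simp
    have : 0 ≤ lam := by
      rcases (hp i).eq_or_lt with h | h
      · exact (hg i).trans (hzero i h.symm)
      · exact hpos i h ▸ hg i
    exact mul_nonpos_of_nonneg_of_nonpos this (by simpa [Finset.sum_sub_distrib] using hbudget)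
  calc ∑ i, F i (p i) = ∑ i, (F i (p i) - g i * (q i - p i)) + ∑ i, g i * (q i - p i) := by
        rw [← Finset.sum_add_distrib]; simp
    _ ≤ ∑ i, F i (q i) + lam * ∑ i, (q i - p i) := by
        rw [Finset.mul_sum]
        exact add_le_add (Finset.sum_le_sum fun i _ => hF i (q i) (hq i))
          (Finset.sum_le_sum fun i _ => hslope i)
    _ ≤ ∑ i, F i (q i) := by linarith

theorem sum_mul_sum_inv_le_of_water_filling {ι κ : Type*} [Fintype ι] [Fintype κ]
    (σ : ι → ℝ) (hσ : ∀ m, 0 < σ m) (α w : κ → ℝ) (hα : ∀ n, 0 ≤ α n) (hw : ∀ n, 0 ≤ w n)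
    (p q : ι → ℝ) (hp : ∀ m, 0 ≤ p m) (hq : ∀ m, 0 ≤ q m) (hbudget : ∑ m, q m ≤ ∑ m, p m)
    (lam : ℝ)
    (hkkt1 : ∀ m, 0 < p m → ∑ n, w n * α n * σ m ^ 2 / (1 + α n * σ m * p m) ^ 2 = lam)
    (hkkt2 : ∀ m, p m = 0 → ∑ n, w n * α n * σ m ^ 2 ≤ lam) :
    ∑ n, w n * ∑ m, ((σ m)⁻¹ + α n * p m)⁻¹ ≤ ∑ n, w n * ∑ m, ((σ m)⁻¹ + α n * q m)⁻¹ := by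
  simp only [Finset.mul_sum]
  rw [Finset.sum_comm, Finset.sum_comm (γ := κ)]
  have hden : ∀ m n {y : ℝ}, 0 ≤ y → 0 < (σ m)⁻¹ + α n * y := fun m n _ hy =>
    add_pos_of_pos_of_nonneg (inv_pos.mpr (hσ m)) (mul_nonneg (hα n) hy)
  -- the paper's form of `α / (σ⁻¹ + α p)²`, minus the derivative of `y ↦ (σ⁻¹ + α y)⁻¹` at `p`
  have hmarginal : ∀ m n, w n * α n * σ m ^ 2 / (1 + α n * σ m * p m) ^ 2
      = w n * (α n / ((σ m)⁻¹ + α n * p m) ^ 2) := fun m n => by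
    have := (hσ m).ne'
    have : 1 + α n * σ m * p m ≠ 0 := by have := hσ m; have := hα n; have := hp m; positivity
    field_simp
  refine sum_le_sum_of_kkt (fun m y => ∑ n, w n * ((σ m)⁻¹ + α n * y)⁻¹)
    (fun m => ∑ n, w n * α n * σ m ^ 2 / (1 + α n * σ m * p m) ^ 2) p q lam
    (fun m y hy => ?_) (fun m => ?_) hkkt1 (fun m h => ?_) hp hq hbudget
  · simp only [Finset.sum_mul, ← Finset.sum_sub_distrib, hmarginal]
    refine Finset.sum_le_sum fun n _ => ?_
    calc w n * ((σ m)⁻¹ + α n * p m)⁻¹ - w n * (α n / ((σ m)⁻¹ + α n * p m) ^ 2) * (y - p m)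
        = w n * (((σ m)⁻¹ + α n * p m)⁻¹
            - ((σ m)⁻¹ + α n * y - ((σ m)⁻¹ + α n * p m)) / ((σ m)⁻¹ + α n * p m) ^ 2) := by
          ring
      _ ≤ w n * ((σ m)⁻¹ + α n * y)⁻¹ :=
          mul_le_mul_of_nonneg_left (inv_sub_div_sq_le_inv (hden m n (hp m)) (hden m n hy)) (hw n)
  · exact Finset.sum_nonneg fun n _ => by have := hw n; have := hα n; positivity
  · simpa [h] using hkkt2 m h

theorem water_filling_optimal_general {N M : ℕ}
    (U : Matrix (Fin N) (Fin N) ℂ) (hU : U ∈ Matrix.unitaryGroup (Fin N) ℂ)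
    (σ : Fin N → ℝ) (hσ : ∀ m, 0 < σ m)
    (Z : Matrix (Fin N) (Fin N) ℂ)
    (hZ : Z = U * Matrix.diagonal (fun m => (σ m : ℂ)) * Uᴴ)
    (α w : Fin M → ℝ) (hα : ∀ n, 0 < α n) (hw : ∀ n, 0 < w n)
    (τ : ℝ)
    (p : Fin N → ℝ) (hp : ∀ m, 0 ≤ p m) (hpsum : ∑ m, p m = τ)
    (lam : ℝ)
    (hkkt1 : ∀ m, 0 < p m →
      ∑ n, w n * α n * σ m ^ 2 / (1 + α n * σ m * p m) ^ 2 = lam)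
    (hkkt2 : ∀ m, p m = 0 → ∑ n, w n * α n * σ m ^ 2 ≤ lam) :
    ∀ Q' : Matrix (Fin N) (Fin N) ℂ, Q'.PosSemidef → Q' * Z = Z * Q' →
      Q'.trace.re ≤ τ →
      (∑ n, w n * ((Z⁻¹ + (α n : ℂ) •
          (U * Matrix.diagonal (fun m => (p m : ℂ)) * Uᴴ))⁻¹).trace.re) ≤
        ∑ n, w n * ((Z⁻¹ + (α n : ℂ) • Q')⁻¹).trace.re := by
  intro Q hQ _ htrace
  have hZinv : Z⁻¹ = U * diagonal (fun m => (((σ m)⁻¹ : ℝ) : ℂ)) * Uᴴ := by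
    rw [hZ, inv_conj_of_mem_unitaryGroup hU,
      inv_diagonal_of_ne_zero fun m => Complex.ofReal_ne_zero.mpr (hσ m).ne']
    simp
  set B := Uᴴ * Q * U
  have hQB : Q = U * B * Uᴴ := (conj_conjTranspose_mul_mul_of_mem_unitaryGroup hU Q).symm
  have hB : B.PosSemidef := hQ.conjTranspose_mul_mul_same U
  have hbudget : ∑ m, (B m m).re ≤ ∑ m, p m := by
    rw [hpsum, ← Complex.re_sum]
    calc _ = Q.trace.re := by rw [hQB, trace_conj_of_mem_unitaryGroup hU]; rfl
      _ ≤ τ := htrace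
  have hσinv : ∀ m, 0 < (σ m)⁻¹ := fun m => inv_pos.mpr (hσ m)
  calc ∑ n, w n * ((Z⁻¹ + (α n : ℂ) • (U * diagonal (fun m => (p m : ℂ)) * Uᴴ))⁻¹).trace.re
      = ∑ n, w n * ∑ m, ((σ m)⁻¹ + α n * p m)⁻¹ := by
        simp only [hZinv, trace_inv_conj_add_smul_conj_of_mem_unitaryGroup hU,
          re_trace_inv_diagonal_add_smul_diagonal hσinv (hα _).le hp]
    _ ≤ ∑ n, w n * ∑ m, ((σ m)⁻¹ + α n * (B m m).re)⁻¹ :=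
        sum_mul_sum_inv_le_of_water_filling σ hσ α w (fun n => (hα n).le) (fun n => (hw n).le)
          p _ hp (fun m => (Complex.le_def.mp hB.diag_nonneg).1) hbudget lam hkkt1 hkkt2
    _ ≤ ∑ n, w n * ((Z⁻¹ + (α n : ℂ) • Q)⁻¹).trace.re := by
        refine Finset.sum_le_sum fun n _ => mul_le_mul_of_nonneg_left ?_ (hw n).le
        rw [hQB, hZinv, trace_inv_conj_add_smul_conj_of_mem_unitaryGroup hU]
        exact sum_inv_add_re_diag_le_re_trace_inv hσinv (hα n).le hB

/-- Water-filling optimality: among Hermitian PSD matrices Q' commuting with Z and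
    satisfying Tr(Q') ≤ τ, the matrix Q = U Diag(p) Uᴴ whose powers satisfy the
    KKT water-filling conditions minimizes Σ_n w_n Tr[(Z⁻¹ + α_n Q)⁻¹]. -/
theorem water_filling_optimal {N M : ℕ}
    (U : Matrix (Fin N) (Fin N) ℂ) (hU : U ∈ Matrix.unitaryGroup (Fin N) ℂ)
    (σ : Fin N → ℝ) (hσ : ∀ m, 0 < σ m) (hord : Antitone σ)
    (Z : Matrix (Fin N) (Fin N) ℂ)
    (hZ : Z = U * Matrix.diagonal (fun m => (σ m : ℂ)) * Uᴴ)
    (α w : Fin M → ℝ) (hα : ∀ n, 0 < α n) (hw : ∀ n, 0 < w n)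
    (τ : ℝ) (hτ : 0 < τ)
    (p : Fin N → ℝ) (hp : ∀ m, 0 ≤ p m) (hpsum : ∑ m, p m = τ)
    (lam : ℝ)
    (hkkt1 : ∀ m, 0 < p m →
      ∑ n, w n * α n * σ m ^ 2 / (1 + α n * σ m * p m) ^ 2 = lam)
    (hkkt2 : ∀ m, p m = 0 → ∑ n, w n * α n * σ m ^ 2 ≤ lam) :
    ∀ Q' : Matrix (Fin N) (Fin N) ℂ, Q'.PosSemidef → Q' * Z = Z * Q' →
      Q'.trace.re ≤ τ →
      (∑ n, w n * ((Z⁻¹ + (α n : ℂ) •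
          (U * Matrix.diagonal (fun m => (p m : ℂ)) * Uᴴ))⁻¹).trace.re) ≤
        ∑ n, w n * ((Z⁻¹ + (α n : ℂ) • Q')⁻¹).trace.re :=
  water_filling_optimal_general U hU σ hσ Z hZ α w hα hw τ p hp hpsum lam hkkt1 hkkt2
end
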